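/- arXiv:1611.01081 — 4 statements merged into one kernel-verified Lean document; each statement's English description precedes it below -/
import Mathlib

section
/- Suppose for each k ∈ ℕ a set H k of smooth vector fields on M is given such that: H is monotone in k; each H k is closed under addition; and each H k is closed under multiplication by smooth real-valued functions (if X ∈ H k and h : M → ℝ is smooth then h·X ∈ H k). Let i, j ≥ 1, let X ∈ H i and Y ∈ H j be smooth vector fields, and let f, g : M → ℝ be smooth. Then the vector field ⁅f·X, g·Y⁆ − (f·g)·⁅X,Y⁆ belongs to H (i+j−1). (In other words, modulo sections of order i+j−1, the Lie bracket induces a C^∞(M)-bilinear bracket: ⁅fX, gY⁆ ≡ fg⁅X,Y⁆ mod H^{i+j−1}.) -/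
/-!
By the Leibniz rule for the Lie bracket,
`⁅f • X, g • Y⁆ = (f * g) • ⁅X, Y⁆ + (f * X g) • Y - (g * Y f) • X`,
so the difference in question is a combination of `Y ∈ H j` and `X ∈ H i` with smooth
coefficients. As `i, j ≥ 1`, both `H i` and `H j` lie in `H (i + j - 1)`, which is closed under
smooth multiples and sums.
-/

open Set Manifold

noncomputable section

namespace TangentGroupoid

variable {𝕜 : Type*} [NontriviallyNormedField 𝕜]
  {E : Type*} [NormedAddCommGroup E] [NormedSpace 𝕜 E]
  {H : Type*} [TopologicalSpace H] {I : ModelWithCorners 𝕜 E H}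
  {M : Type*} [TopologicalSpace M] [ChartedSpace H M]
  {E' : Type*} [NormedAddCommGroup E'] [NormedSpace 𝕜 E']
  {H' : Type*} [TopologicalSpace H'] {I' : ModelWithCorners 𝕜 E' H'}
  {M' : Type*} [TopologicalSpace M'] [ChartedSpace H' M']

variable (I I') in
/-- The pullback of a vector field under a map between manifolds, within a set. -/
def mpullbackWithin (f : M → M') (V : ∀ x : M', TangentSpace I' x) (s : Set M) (x : M) :
    TangentSpace I x :=
  (mfderivWithin I I' f s x).inverse (V (f x))

variable (I) in
/-- The Lie bracket of two vector fields on a manifold, within a set. -/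
def mlieBracketWithin (V W : ∀ x : M, TangentSpace I x) (s : Set M) (x₀ : M) :
    TangentSpace I x₀ :=
  mpullbackWithin I 𝓘(𝕜, E) (extChartAt I x₀)
    (VectorField.lieBracketWithin 𝕜
      (mpullbackWithin 𝓘(𝕜, E) I (extChartAt I x₀).symm V (range I))
      (mpullbackWithin 𝓘(𝕜, E) I (extChartAt I x₀).symm W (range I))
      ((extChartAt I x₀).symm ⁻¹' s ∩ range I)) s x₀

variable (I) in
/-- The Lie bracket of two vector fields on a manifold. -/
def mlieBracket (V W : ∀ x : M, TangentSpace I x) (x₀ : M) : TangentSpace I x₀ :=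
  mlieBracketWithin I V W univ x₀

end TangentGroupoid

open TangentGroupoid

namespace TangentGroupoid

variable {𝕜 : Type*} [NontriviallyNormedField 𝕜]
  {E : Type*} [NormedAddCommGroup E] [NormedSpace 𝕜 E]
  {H : Type*} [TopologicalSpace H] {I : ModelWithCorners 𝕜 E H}
  {M : Type*} [TopologicalSpace M] [ChartedSpace H M]

theorem mlieBracket_eq_vectorField_mlieBracket :
    mlieBracket I = VectorField.mlieBracket (M := M) I := by
  ext V W x
  simp only [mlieBracket, mlieBracketWithin, VectorField.mlieBracket,
    VectorField.mlieBracketWithin]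
  exact congrFun VectorField.mpullbackWithin_univ x

theorem mlieBracket_smul_smul [IsManifold I 2 M] [CompleteSpace E]
    {V W : ∀ x : M, TangentSpace I x} {f g : M → 𝕜} {x : M}
    (hf : MDifferentiableAt I 𝓘(𝕜) f x) (hg : MDifferentiableAt I 𝓘(𝕜) g x)
    (hV : MDifferentiableAt I I.tangent (fun y => (⟨y, V y⟩ : TangentBundle I M)) x)
    (hW : MDifferentiableAt I I.tangent (fun y => (⟨y, W y⟩ : TangentBundle I M)) x) :
    mlieBracket I (fun y => f y • V y) (fun y => g y • W y) x
      = (f x * g x) • mlieBracket I V W x + (f x * mvfderiv I g x (V x)) • W x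
        - (g x * mvfderiv I f x (W x)) • V x := by
  rw [mlieBracket_eq_vectorField_mlieBracket]
  change VectorField.mlieBracket I (f • V) (g • W) x = _
  rw [VectorField.mlieBracket_smul_left hf hV, VectorField.mlieBracket_smul_right hg hW]
  simp only [Pi.smul_apply', map_smul, smul_eq_mul]
  module

theorem _root_.ContMDiff.mvfderiv_apply [IsManifold I 1 M]
    {F : Type*} [NormedAddCommGroup F] [NormedSpace 𝕜 F] {m n : WithTop ℕ∞}
    {g : M → F} (hg : ContMDiff I 𝓘(𝕜, F) n g) {V : ∀ x : M, TangentSpace I x}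
    (hV : ContMDiff I I.tangent m (fun x => (⟨x, V x⟩ : TangentBundle I M))) (hmn : m + 1 ≤ n) :
    ContMDiff I 𝓘(𝕜, F) m (fun x => mvfderiv I g x (V x)) :=
  contDiff_snd.contMDiff.comp
    (contMDiff_tangentBundleModelSpaceHomeomorph.comp ((hg.contMDiff_tangentMap hmn).comp hV))

end TangentGroupoid

theorem mlieBracket_smul_smul_sub_mem_general
    {E : Type*} [NormedAddCommGroup E] [NormedSpace ℝ E] [FiniteDimensional ℝ E]
    {M : Type*} [TopologicalSpace M] [ChartedSpace E M]
    [IsManifold 𝓘(ℝ, E) (⊤ : ℕ∞) M]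
    (H : ℕ → Set (∀ x : M, TangentSpace 𝓘(ℝ, E) x))
    (hHmono : Monotone H)
    (hHadd : ∀ k, ∀ V ∈ H k, ∀ V' ∈ H k, (fun x => V x + V' x) ∈ H k)
    (hHsmul : ∀ k, ∀ h : M → ℝ, ContMDiff 𝓘(ℝ, E) 𝓘(ℝ) (⊤ : ℕ∞) h →
      ∀ V ∈ H k, (fun x => h x • V x) ∈ H k)
    (i j : ℕ) (hi : 1 ≤ i) (hj : 1 ≤ j)
    (X Y : ∀ x : M, TangentSpace 𝓘(ℝ, E) x) (hXH : X ∈ H i) (hYH : Y ∈ H j)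
    (hX : ContMDiff 𝓘(ℝ, E) 𝓘(ℝ, E).tangent (⊤ : ℕ∞)
      (fun x : M => (⟨x, X x⟩ : TangentBundle 𝓘(ℝ, E) M)))
    (hY : ContMDiff 𝓘(ℝ, E) 𝓘(ℝ, E).tangent (⊤ : ℕ∞)
      (fun x : M => (⟨x, Y x⟩ : TangentBundle 𝓘(ℝ, E) M)))
    (f g : M → ℝ)
    (hf : ContMDiff 𝓘(ℝ, E) 𝓘(ℝ) (⊤ : ℕ∞) f) (hg : ContMDiff 𝓘(ℝ, E) 𝓘(ℝ) (⊤ : ℕ∞) g) :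
    (fun x => mlieBracket 𝓘(ℝ, E) (fun y => f y • X y) (fun y => g y • Y y) x
        - (f x * g x) • mlieBracket 𝓘(ℝ, E) X Y x) ∈ H (i + j - 1) := by
  have hXg : ContMDiff 𝓘(ℝ, E) 𝓘(ℝ) (⊤ : ℕ∞) fun x => f x * mvfderiv 𝓘(ℝ, E) g x (X x) :=
    hf.mul (hg.mvfderiv_apply hX le_rfl)
  have hYf : ContMDiff 𝓘(ℝ, E) 𝓘(ℝ) (⊤ : ℕ∞) fun x => -(g x * mvfderiv 𝓘(ℝ, E) f x (Y x)) :=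
    (hg.mul (hf.mvfderiv_apply hY le_rfl)).neg
  have hbracket : (fun x => mlieBracket 𝓘(ℝ, E) (fun y => f y • X y) (fun y => g y • Y y) x
        - (f x * g x) • mlieBracket 𝓘(ℝ, E) X Y x)
      = fun x => (f x * mvfderiv 𝓘(ℝ, E) g x (X x)) • Y x
          + (-(g x * mvfderiv 𝓘(ℝ, E) f x (Y x))) • X x := by
    funext x
    rw [mlieBracket_smul_smul ((hf x).mdifferentiableAt (by simp))
      ((hg x).mdifferentiableAt (by simp)) ((hX x).mdifferentiableAt (by simp))
      ((hY x).mdifferentiableAt (by simp))]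
    module
  rw [hbracket]
  exact hHadd _ _ (hHsmul _ _ hXg Y (hHmono (by omega) hYH))
    _ (hHsmul _ _ hYf X (hHmono (by omega) hXH))

/-- modulo vector fields of order `i+j-1`, the Lie bracket induces a
`C^∞(M)`-bilinear bracket: `⁅fX, gY⁆ ≡ fg⁅X,Y⁆ mod H^{i+j−1}`. -/
theorem mlieBracket_smul_smul_sub_mem
    {E : Type*} [NormedAddCommGroup E] [NormedSpace ℝ E] [FiniteDimensional ℝ E]
    {M : Type*} [TopologicalSpace M] [ChartedSpace E M]
    [IsManifold 𝓘(ℝ, E) (⊤ : ℕ∞) M]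
    (H : ℕ → Set (∀ x : M, TangentSpace 𝓘(ℝ, E) x))
    (hHsmooth : ∀ k, ∀ V ∈ H k, ContMDiff 𝓘(ℝ, E) 𝓘(ℝ, E).tangent (⊤ : ℕ∞)
      (fun x : M => (⟨x, V x⟩ : TangentBundle 𝓘(ℝ, E) M)))
    (hHmono : Monotone H)
    (hHadd : ∀ k, ∀ V ∈ H k, ∀ V' ∈ H k, (fun x => V x + V' x) ∈ H k)
    (hHsmul : ∀ k, ∀ h : M → ℝ, ContMDiff 𝓘(ℝ, E) 𝓘(ℝ) (⊤ : ℕ∞) h →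
      ∀ V ∈ H k, (fun x => h x • V x) ∈ H k)
    (i j : ℕ) (hi : 1 ≤ i) (hj : 1 ≤ j)
    (X Y : ∀ x : M, TangentSpace 𝓘(ℝ, E) x) (hXH : X ∈ H i) (hYH : Y ∈ H j)
    (hX : ContMDiff 𝓘(ℝ, E) 𝓘(ℝ, E).tangent (⊤ : ℕ∞)
      (fun x : M => (⟨x, X x⟩ : TangentBundle 𝓘(ℝ, E) M)))
    (hY : ContMDiff 𝓘(ℝ, E) 𝓘(ℝ, E).tangent (⊤ : ℕ∞)
      (fun x : M => (⟨x, Y x⟩ : TangentBundle 𝓘(ℝ, E) M)))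
    (f g : M → ℝ)
    (hf : ContMDiff 𝓘(ℝ, E) 𝓘(ℝ) (⊤ : ℕ∞) f) (hg : ContMDiff 𝓘(ℝ, E) 𝓘(ℝ) (⊤ : ℕ∞) g) :
    (fun x => mlieBracket 𝓘(ℝ, E) (fun y => f y • X y) (fun y => g y • Y y) x
        - (f x * g x) • mlieBracket 𝓘(ℝ, E) X Y x) ∈ H (i + j - 1) :=
  mlieBracket_smul_smul_sub_mem_general H hHmono hHadd hHsmul i j hi hj X Y hXH hYH hX hY f g hf hg
end
end

section
/- Let E be a finite-dimensional real normed vector space, m ∈ ℕ, and let f : ℝ → E be a C^∞ function such that iteratedDeriv j f 0 = 0 for all j < m. Then there exists a C^∞ function g : ℝ → E such that f t = t^m • g t for all t ∈ ℝ. -/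
/-!
Hadamard's lemma: if `f 0 = 0` then `f t = t • ∫₀¹ f'(t s) ds`. Differentiating under the
integral sign shows that `t ↦ ∫₀¹ s ^ k • h (t s) ds` is as smooth as `h`, with `j`-th derivative
at `0` a multiple of `h⁽ʲ⁾ 0`; so the quotient again has vanishing derivatives of order `< m - 1`
at `0`, and induction on `m` peels off one factor of `t` at a time.
-/

open intervalIntegral Metric Set
open scoped ContDiff Interval

section HadamardIntegral

variable {E : Type*} [NormedAddCommGroup E] [NormedSpace ℝ E]

noncomputable def hadamardIntegral (k : ℕ) (h : ℝ → E) (t : ℝ) : E :=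
  ∫ s in (0 : ℝ)..1, s ^ k • h (t * s)

theorem hadamardIntegral_apply_zero [CompleteSpace E] (k : ℕ) (h : ℝ → E) :
    hadamardIntegral k h 0 = (∫ s in (0 : ℝ)..1, s ^ k) • h 0 := by
  simp only [hadamardIntegral, zero_mul, intervalIntegral.integral_smul_const]

theorem continuous_hadamardIntegral (k : ℕ) {h : ℝ → E} (hh : Continuous h) :
    Continuous (hadamardIntegral k h) := by
  unfold hadamardIntegral
  fun_prop

theorem hasDerivAt_hadamardIntegral (k : ℕ) {h : ℝ → E} (hh : ContDiff ℝ 1 h) (x₀ : ℝ) :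
    HasDerivAt (hadamardIntegral k h) (hadamardIntegral (k + 1) (deriv h) x₀) x₀ := by
  have hd : Differentiable ℝ h := hh.differentiable one_ne_zero
  have hd' : Continuous (deriv h) := hh.continuous_deriv le_rfl
  obtain ⟨M, hM⟩ := (isCompact_closedBall (0 : ℝ) (|x₀| + 1)).exists_bound_of_continuousOn
    hd'.continuousOn
  have h_bound : ∀ s ∈ Ι (0 : ℝ) 1, ∀ x ∈ ball x₀ 1, ‖s ^ (k + 1) • deriv h (x * s)‖ ≤ M := by
    intro s hs x hx
    rw [uIoc_of_le zero_le_one] at hs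
    have hs₁ : |s| ≤ 1 := abs_le.mpr ⟨by linarith [hs.1], hs.2⟩
    have hx : |x| ≤ |x₀| + 1 := by
      have := abs_sub_abs_le_abs_sub x x₀
      rw [mem_ball, Real.dist_eq] at hx
      linarith
    have hxs : x * s ∈ closedBall (0 : ℝ) (|x₀| + 1) := by
      rw [mem_closedBall_zero_iff, Real.norm_eq_abs, abs_mul]
      nlinarith [abs_nonneg x, abs_nonneg s]
    calc ‖s ^ (k + 1) • deriv h (x * s)‖ = |s| ^ (k + 1) * ‖deriv h (x * s)‖ := by
          rw [norm_smul, Real.norm_eq_abs, abs_pow]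
      _ ≤ 1 * M := by gcongr; exacts [pow_le_one₀ (abs_nonneg s) hs₁, hM _ hxs]
      _ = M := one_mul M
  have h_diff : ∀ s ∈ Ι (0 : ℝ) 1, ∀ x ∈ ball x₀ 1,
      HasDerivAt (fun x => s ^ k • h (x * s)) (s ^ (k + 1) • deriv h (x * s)) x := by
    intro s _ x _
    have := ((hd (x * s)).hasDerivAt.scomp x (hasDerivAt_mul_const s)).const_smul (s ^ k)
    rwa [smul_smul, ← pow_succ] at this
  exact (hasDerivAt_integral_of_dominated_loc_of_deriv_le (ball_mem_nhds x₀ one_pos)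
    (.of_forall fun x => (by fun_prop : Continuous _).aestronglyMeasurable)
    ((by fun_prop : Continuous _).intervalIntegrable 0 1)
    ((by fun_prop : Continuous _).aestronglyMeasurable)
    (.of_forall h_bound) intervalIntegrable_const (.of_forall h_diff)).2

theorem deriv_hadamardIntegral (k : ℕ) {h : ℝ → E} (hh : ContDiff ℝ 1 h) :
    deriv (hadamardIntegral k h) = hadamardIntegral (k + 1) (deriv h) :=
  funext fun x => (hasDerivAt_hadamardIntegral k hh x).deriv

theorem contDiff_hadamardIntegral_of_nat {n : ℕ} (k : ℕ) {h : ℝ → E} (hh : ContDiff ℝ n h) :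
    ContDiff ℝ n (hadamardIntegral k h) := by
  induction n generalizing k h with
  | zero => exact contDiff_zero.mpr (continuous_hadamardIntegral k (contDiff_zero.mp hh))
  | succ n ih =>
    have hh₁ : ContDiff ℝ 1 h := hh.of_le (by exact_mod_cast Nat.le_add_left 1 n)
    rw [Nat.cast_succ, contDiff_succ_iff_deriv] at hh ⊢
    refine ⟨fun x => (hasDerivAt_hadamardIntegral k hh₁ x).differentiableAt, by simp, ?_⟩
    rw [deriv_hadamardIntegral k hh₁]
    exact ih (k + 1) hh.2.2

theorem contDiff_hadamardIntegral (k : ℕ) {h : ℝ → E} (hh : ContDiff ℝ ∞ h) :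
    ContDiff ℝ ∞ (hadamardIntegral k h) :=
  contDiff_infty.mpr fun n => contDiff_hadamardIntegral_of_nat k (hh.of_le (by exact_mod_cast le_top))

theorem iteratedDeriv_hadamardIntegral (j k : ℕ) {h : ℝ → E} (hh : ContDiff ℝ j h) :
    iteratedDeriv j (hadamardIntegral k h) = hadamardIntegral (k + j) (iteratedDeriv j h) := by
  induction j generalizing k h with
  | zero => simp
  | succ j ih =>
    have hh₁ : ContDiff ℝ 1 h := hh.of_le (by exact_mod_cast Nat.le_add_left 1 j)
    rw [iteratedDeriv_succ', iteratedDeriv_succ', deriv_hadamardIntegral k hh₁,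
      ih (k + 1) ?_, add_assoc, add_comm 1 j]
    rw [Nat.cast_succ, contDiff_succ_iff_deriv] at hh
    exact hh.2.2

theorem eq_smul_hadamardIntegral_deriv [CompleteSpace E] {f : ℝ → E} (hf : ContDiff ℝ 1 f)
    (hf0 : f 0 = 0) (t : ℝ) : f t = t • hadamardIntegral 0 (deriv f) t := by
  have hftc : ∫ u in (0 : ℝ)..t, deriv f u = f t - f 0 :=
    integral_deriv_eq_sub (fun x _ => hf.differentiable one_ne_zero x)
      ((hf.continuous_deriv le_rfl).intervalIntegrable 0 t)
  have hscale : t • ∫ s in (0 : ℝ)..1, deriv f (t * s) = ∫ u in (0 : ℝ)..t, deriv f u := by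
    simpa only [mul_zero, mul_one] using smul_integral_comp_mul_left (deriv f) t (a := 0) (b := 1)
  simp only [hadamardIntegral, pow_zero, one_smul]
  rw [hscale, hftc, hf0, sub_zero]

end HadamardIntegral

/-- a smooth function `f : ℝ → E` whose derivatives of order `< m` all vanish
at `0` factors as `f t = t^m • g t` with `g` smooth. -/
theorem smooth_factor_pow
    {E : Type*} [NormedAddCommGroup E] [NormedSpace ℝ E] [FiniteDimensional ℝ E]
    (m : ℕ) (f : ℝ → E) (hf : ContDiff ℝ (⊤ : ℕ∞) f)
    (h : ∀ j : ℕ, j < m → iteratedDeriv j f 0 = 0) :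
    ∃ g : ℝ → E, ContDiff ℝ (⊤ : ℕ∞) g ∧ ∀ t : ℝ, f t = t ^ m • g t := by
  induction m generalizing f with
  | zero => exact ⟨f, hf, fun t => by rw [pow_zero, one_smul]⟩
  | succ m ih =>
    have hf₁ : ContDiff ℝ 1 f := hf.of_le (by exact_mod_cast le_top)
    have hf' : ContDiff ℝ ∞ (deriv f) := (contDiff_infty_iff_deriv.mp hf).2
    have hf0 : f 0 = 0 := h 0 m.succ_pos
    obtain ⟨g, hg, hfg⟩ := ih (hadamardIntegral 0 (deriv f)) (contDiff_hadamardIntegral 0 hf')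
      fun j hj => by
        rw [iteratedDeriv_hadamardIntegral j 0 (hf'.of_le (by exact_mod_cast le_top)),
          hadamardIntegral_apply_zero, ← iteratedDeriv_succ', h (j + 1) (by omega), smul_zero]
    refine ⟨g, hg, fun t => ?_⟩
    rw [eq_smul_hadamardIntegral_deriv hf₁ hf0 t, hfg t, smul_smul, ← pow_succ']
end

section
/- For each 1 ≤ i ≤ N let Y_i : ℝ → V be a C^∞ function with Y_i t ∈ W_i for all t, and define X : ℝ → V by X t := Σ_{i=1}^N t^i • Y_i t. Then X is C^∞ and for every k ∈ ℕ, iteratedDeriv k X 0 ∈ F^k. (This says the image of the map Φ^ψ, built from a splitting and the dilations, lands in the module 𝔛_H of sections of the tangent Lie algebroid.) -/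
/-!
By Leibniz' rule, the `k`-th derivative at `0` of `t ↦ tⁱ • Y t` is `C(k, i) i! • Y⁽ᵏ⁻ⁱ⁾(0)`
when `i ≤ k` and vanishes when `k < i`. Derivatives of a function with values in the closed
subspace `Wᵢ` stay in `Wᵢ`, so only the summands with `i ≤ min k N` contribute to `X⁽ᵏ⁾(0)`,
each with a value in `Wᵢ`.
-/

open Finset

section

variable {𝕜 F : Type*} [NontriviallyNormedField 𝕜] [NormedAddCommGroup F] [NormedSpace 𝕜 F]

theorem deriv_mem_of_forall_mem {W : Submodule 𝕜 F} (hW : IsClosed (W : Set F)) {f : 𝕜 → F}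
    (hf : ∀ t, f t ∈ W) (t : 𝕜) : deriv f t ∈ W :=
  closure_minimal (Submodule.span_le.mpr (Set.image_subset_iff.mpr fun s _ => hf s)) hW
    (range_deriv_subset_closure_span_image f dense_univ ⟨t, rfl⟩)

theorem iteratedDeriv_mem_of_forall_mem {W : Submodule 𝕜 F} (hW : IsClosed (W : Set F))
    {f : 𝕜 → F} (hf : ∀ t, f t ∈ W) (k : ℕ) (t : 𝕜) : iteratedDeriv k f t ∈ W := by
  induction k generalizing t with
  | zero => simpa using hf t
  | succ k ih =>
    rw [iteratedDeriv_succ]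
    exact deriv_mem_of_forall_mem hW ih t

theorem iteratedDeriv_pow_smul_zero {f : 𝕜 → F} {k : ℕ} (hf : ContDiff 𝕜 k f) (i : ℕ) :
    iteratedDeriv k (fun t => t ^ i • f t) 0 =
      if i ≤ k then (k.choose i * i.factorial) • iteratedDeriv (k - i) f 0 else 0 := by
  have hLeibniz := iteratedDerivWithin_smul (Set.mem_univ 0) uniqueDiffOn_univ
    (f := fun t : 𝕜 => t ^ i) (by fun_prop) hf.contDiffAt.contDiffWithinAt
  simp only [iteratedDerivWithin_univ] at hLeibniz
  rw [show (fun t => t ^ i • f t) = (fun t : 𝕜 => t ^ i) • f from rfl, hLeibniz]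
  simp only [iteratedDeriv_fun_pow_zero, Nat.cast_ite, Nat.cast_zero, ite_smul, zero_smul,
    smul_ite, smul_zero, sum_ite_eq', mem_range, Nat.lt_succ_iff, Nat.cast_smul_eq_nsmul, mul_smul]

end

theorem image_of_Phi_mem_module_general
    {V : Type*} [NormedAddCommGroup V] [NormedSpace ℝ V] [FiniteDimensional ℝ V]
    (N : ℕ) (W : ℕ → Submodule ℝ V)
    (Y : ℕ → ℝ → V)
    (hYsmooth : ∀ i ∈ Finset.Icc 1 N, ContDiff ℝ (⊤ : ℕ∞) (Y i))
    (hYW : ∀ i ∈ Finset.Icc 1 N, ∀ t : ℝ, Y i t ∈ W i)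
    (X : ℝ → V) (hX : X = fun t => ∑ i ∈ Finset.Icc 1 N, t ^ i • Y i t) :
    ContDiff ℝ (⊤ : ℕ∞) X ∧
      ∀ k : ℕ, iteratedDeriv k X 0 ∈ ⨆ i ∈ Finset.Icc 1 (min k N), W i := by
  have hterm : ∀ i ∈ Icc 1 N, ContDiff ℝ (⊤ : ℕ∞) fun t : ℝ => t ^ i • Y i t :=
    fun i hi => (contDiff_id.pow i).smul (hYsmooth i hi)
  subst hX
  refine ⟨ContDiff.sum hterm, fun k => ?_⟩
  rw [iteratedDeriv_fun_sum fun i hi => (hterm i hi).contDiffAt.of_le (mod_cast le_top)]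
  refine Submodule.sum_mem _ fun i hi => ?_
  rw [iteratedDeriv_pow_smul_zero ((hYsmooth i hi).of_le (mod_cast le_top))]
  split_ifs with hik
  · have hki : i ∈ Icc 1 (min k N) := by
      rw [mem_Icc] at hi ⊢
      exact ⟨hi.1, le_min hik hi.2⟩
    refine (le_biSup W hki) (Submodule.smul_of_tower_mem _ _ ?_)
    exact iteratedDeriv_mem_of_forall_mem (W i).closed_of_finiteDimensional (hYW i hi) _ 0
  · exact Submodule.zero_mem _

/-- if `Y_i : ℝ → V` are smooth with values in `W_i` and
`X t = Σ_{i=1}^N t^i • Y_i t`, then `X` is smooth and `iteratedDeriv k X 0 ∈ F^k`, where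
`F^k = W_1 + ⋯ + W_{min(k,N)}`.  (The image of `Φ^ψ` lands in the module `𝔛_H`.) -/
theorem image_of_Phi_mem_module
    {V : Type*} [NormedAddCommGroup V] [NormedSpace ℝ V] [FiniteDimensional ℝ V]
    (N : ℕ) (hN : 1 ≤ N) (W : ℕ → Submodule ℝ V)
    (hW : DirectSum.IsInternal W) (hW0 : W 0 = ⊥) (hWtop : ∀ i : ℕ, N < i → W i = ⊥)
    (Y : ℕ → ℝ → V)
    (hYsmooth : ∀ i ∈ Finset.Icc 1 N, ContDiff ℝ (⊤ : ℕ∞) (Y i))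
    (hYW : ∀ i ∈ Finset.Icc 1 N, ∀ t : ℝ, Y i t ∈ W i)
    (X : ℝ → V) (hX : X = fun t => ∑ i ∈ Finset.Icc 1 N, t ^ i • Y i t) :
    ContDiff ℝ (⊤ : ℕ∞) X ∧
      ∀ k : ℕ, iteratedDeriv k X 0 ∈ ⨆ i ∈ Finset.Icc 1 (min k N), W i :=
  image_of_Phi_mem_module_general N W Y hYsmooth hYW X hX
end

section
/- Let A : V → V be a linear map such that for every k with 1 ≤ k ≤ N, A maps W_k into F^k and (A − id) maps W_k into F^{k−1} (i.e. A preserves the filtration and induces the identity on each graded quotient). Then there is a map B : ℝ → (V →ₗ[ℝ] V), polynomial in t (in particular C^∞), such that B 0 = id and δ_t ∘ B t = A ∘ δ_t for every t ∈ ℝ; in particular for t ≠ 0, B t = δ_t⁻¹ ∘ A ∘ δ_t, and this family extends smoothly through t = 0 with value the identity. (This is the change-of-splitting statement showing the smooth structure on the tangent Lie algebroid is independent of the choice of splitting.) -/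
/-!
Write `π i` for the projections of `V = ⨁ Wᵢ` and let `A_j := ∑_{k ≥ j} π (k - j) ∘ A ∘ π k` be
the part of `A` that lowers the degree by `j`. Since `δ_t` acts on `Wᵢ` by `tⁱ`, we have
`t ^ j • δ_t ∘ A_j = A_j ∘ δ_t`. Because `A` preserves the filtration, `A = ∑_{j ≤ N} A_j`, so
`B t := ∑_{j ≤ N} t ^ j • A_j` satisfies `δ_t ∘ B t = A ∘ δ_t`; because `A` induces the identity on
the graded pieces, `B 0 = A_0 = id`.
-/

open DirectSum Finset

namespace DirectSum

section Decomposition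

variable {R M : Type*} [CommSemiring R] [AddCommMonoid M] [Module R M]
  (W : ℕ → Submodule R M) [Decomposition W]

noncomputable def decomposeProj (i : ℕ) : M →ₗ[R] M :=
  (W i).subtype ∘ₗ component R ℕ (fun i => W i) i ∘ₗ (decomposeLinearEquiv W).toLinearMap

@[simp]
theorem decomposeProj_apply (i : ℕ) (x : M) : decomposeProj W i x = decompose W x i := rfl

noncomputable def decomposeLift (f : ∀ i, W i →ₗ[R] M) : M →ₗ[R] M :=
  toModule R ℕ M f ∘ₗ (decomposeLinearEquiv W).toLinearMap

theorem decomposeLift_apply_of_mem (f : ∀ i, W i →ₗ[R] M) {i : ℕ} {x : M} (hx : x ∈ W i) :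
    decomposeLift W f x = f i ⟨x, hx⟩ := by
  simp [decomposeLift, decomposeLinearEquiv_apply, decompose_of_mem W hx, ← lof_eq_of R,
    toModule_lof]

theorem decompose_eq_zero_of_mem_iSup {s : Finset ℕ} {x : M} (hx : x ∈ ⨆ i ∈ s, W i)
    {m : ℕ} (hm : m ∉ s) : (decompose W x m : M) = 0 := by
  have : (⨆ i ∈ s, W i) ≤ LinearMap.ker (decomposeProj W m) :=
    iSup₂_le fun i hi y hy => by
      simp [decompose_of_mem_ne W hy (ne_of_mem_of_not_mem hi hm)]
  simpa using this hx

theorem sum_range_decompose {n : ℕ} {y : M} (hy : ∀ i, n ≤ i → (decompose W y i : M) = 0) :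
    ∑ i ∈ range n, (decompose W y i : M) = y := by
  classical
  conv_rhs => rw [← sum_support_decompose W y]
  refine (sum_subset (fun i hi => ?_) (fun i _ hi => ?_)).symm
  · by_contra hin
    simp_all
  · simpa using hi

noncomputable def degreeLoweringPart (A : M →ₗ[R] M) (j : ℕ) : M →ₗ[R] M :=
  decomposeLift W fun m => if j ≤ m then decomposeProj W (m - j) ∘ₗ A ∘ₗ (W m).subtype else 0

variable {W}

theorem degreeLoweringPart_apply_of_le (A : M →ₗ[R] M) {j m : ℕ} (hjm : j ≤ m) {x : M}
    (hx : x ∈ W m) : degreeLoweringPart W A j x = decompose W (A x) (m - j) := by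
  simp [degreeLoweringPart, decomposeLift_apply_of_mem W _ hx, hjm]

theorem degreeLoweringPart_apply_of_lt (A : M →ₗ[R] M) {j m : ℕ} (hmj : m < j) {x : M}
    (hx : x ∈ W m) : degreeLoweringPart W A j x = 0 := by
  simp [degreeLoweringPart, decomposeLift_apply_of_mem W _ hx, hmj.not_ge]

theorem smul_comp_degreeLoweringPart {t : R} {δ : M →ₗ[R] M}
    (hδ : ∀ i, ∀ x ∈ W i, δ x = t ^ i • x) (A : M →ₗ[R] M) (j : ℕ) :
    t ^ j • (δ ∘ₗ degreeLoweringPart W A j) = degreeLoweringPart W A j ∘ₗ δ := by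
  refine decompose_lhom_ext W fun m => LinearMap.ext fun ⟨x, hx⟩ => ?_
  have hδx : δ x = t ^ m • x := hδ m x hx
  simp only [LinearMap.comp_apply, LinearMap.smul_apply, Submodule.subtype_apply, hδx,
    map_smul]
  rcases le_or_gt j m with hjm | hmj
  · rw [degreeLoweringPart_apply_of_le A hjm hx, hδ _ _ (decompose W (A x) (m - j)).2,
      smul_smul, ← pow_add, Nat.add_sub_cancel' hjm]
  · simp [degreeLoweringPart_apply_of_lt A hmj hx]

theorem sum_degreeLoweringPart {N : ℕ} (hWtop : ∀ i, N < i → W i = ⊥) {A : M →ₗ[R] M}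
    (hA : ∀ m, ∀ x ∈ W m, ∀ i, m < i → (decompose W (A x) i : M) = 0) :
    ∑ j ∈ range (N + 1), degreeLoweringPart W A j = A := by
  refine decompose_lhom_ext W fun m => LinearMap.ext fun ⟨x, hx⟩ => ?_
  simp only [LinearMap.comp_apply, Submodule.subtype_apply, LinearMap.coe_sum, Finset.sum_apply]
  rcases le_or_gt m N with hmN | hNm
  · calc ∑ j ∈ range (N + 1), degreeLoweringPart W A j x
        = ∑ j ∈ range (m + 1), degreeLoweringPart W A j x :=
          (sum_subset (range_subset_range.mpr (by omega)) fun j _ hj =>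
            degreeLoweringPart_apply_of_lt A (by simpa using hj) hx).symm
      _ = ∑ j ∈ range (m + 1), (decompose W (A x) (m - j) : M) :=
          sum_congr rfl fun j hj => degreeLoweringPart_apply_of_le A
            (Nat.lt_succ_iff.mp (mem_range.mp hj)) hx
      _ = ∑ i ∈ range (m + 1), (decompose W (A x) i : M) :=
          sum_range_reflect (fun i => (decompose W (A x) i : M)) (m + 1)
      _ = A x := sum_range_decompose W fun i hi => hA m x hx i hi
  · simp [(Submodule.mem_bot R).mp (hWtop m hNm ▸ hx)]

theorem comp_sum_pow_smul_degreeLoweringPart {N : ℕ} (hWtop : ∀ i, N < i → W i = ⊥)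
    {A : M →ₗ[R] M} (hA : ∀ m, ∀ x ∈ W m, ∀ i, m < i → (decompose W (A x) i : M) = 0)
    {t : R} {δ : M →ₗ[R] M} (hδ : ∀ i, ∀ x ∈ W i, δ x = t ^ i • x) :
    δ ∘ₗ ∑ j ∈ range (N + 1), t ^ j • degreeLoweringPart W A j = A ∘ₗ δ := by
  simp only [← Module.End.mul_eq_comp]
  calc δ * ∑ j ∈ range (N + 1), t ^ j • degreeLoweringPart W A j
      = ∑ j ∈ range (N + 1), t ^ j • (δ * degreeLoweringPart W A j) := by
        simp only [mul_sum, mul_smul_comm]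
    _ = ∑ j ∈ range (N + 1), degreeLoweringPart W A j * δ := by
        simp only [Module.End.mul_eq_comp, smul_comp_degreeLoweringPart hδ]
    _ = A * δ := by rw [← sum_mul, sum_degreeLoweringPart hWtop hA]

theorem degreeLoweringPart_zero {A : M →ₗ[R] M}
    (hA : ∀ m, ∀ x ∈ W m, (decompose W (A x) m : M) = x) :
    degreeLoweringPart W A 0 = LinearMap.id :=
  decompose_lhom_ext W fun m => LinearMap.ext fun ⟨x, hx⟩ => by
    simpa [degreeLoweringPart_apply_of_le A (Nat.zero_le m) hx] using hA m x hx

theorem comp_eq_id_of_mul_eq_one {s t : R} (hst : s * t = 1) {δs δt : M →ₗ[R] M}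
    (hδs : ∀ i, ∀ x ∈ W i, δs x = s ^ i • x) (hδt : ∀ i, ∀ x ∈ W i, δt x = t ^ i • x) :
    δs ∘ₗ δt = LinearMap.id :=
  decompose_lhom_ext W fun m => LinearMap.ext fun ⟨x, hx⟩ => by
    simp [hδt m x hx, hδs m x hx, smul_smul, ← mul_pow, mul_comm t s, hst]

end Decomposition

end DirectSum

theorem Submodule.forall_mem_of_forall_mem_Icc {R M : Type*} [Semiring R] [AddCommMonoid M]
    [Module R M] {W : ℕ → Submodule R M} {N : ℕ} (hW0 : W 0 = ⊥)
    (hWtop : ∀ i, N < i → W i = ⊥) {P : ℕ → M → Prop} (hP : ∀ m, P m 0)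
    (h : ∀ k, 1 ≤ k → k ≤ N → ∀ x ∈ W k, P k x) : ∀ m, ∀ x ∈ W m, P m x := by
  intro m x hx
  rcases Nat.eq_zero_or_pos m with rfl | hm
  · obtain rfl := (Submodule.mem_bot R).mp (hW0 ▸ hx)
    exact hP 0
  rcases le_or_gt m N with hmN | hNm
  · exact h m hm hmN x hx
  · obtain rfl := (Submodule.mem_bot R).mp (hWtop m hNm ▸ hx)
    exact hP m

theorem change_of_splitting_general
    {V : Type*} [NormedAddCommGroup V] [NormedSpace ℝ V]
    (N : ℕ) (W : ℕ → Submodule ℝ V)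
    (hW : DirectSum.IsInternal W) (hW0 : W 0 = ⊥) (hWtop : ∀ i : ℕ, N < i → W i = ⊥)
    (δ : ℝ → V →ₗ[ℝ] V)
    (hδ : ∀ (t : ℝ) (i : ℕ), ∀ x ∈ W i, δ t x = t ^ i • x)
    (A : V →ₗ[ℝ] V)
    (hA1 : ∀ k : ℕ, 1 ≤ k → k ≤ N → ∀ x ∈ W k,
      A x ∈ ⨆ i ∈ Finset.Icc 1 (min k N), W i)
    (hA2 : ∀ k : ℕ, 1 ≤ k → k ≤ N → ∀ x ∈ W k,
      A x - x ∈ ⨆ i ∈ Finset.Icc 1 (min (k - 1) N), W i) :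
    ∃ B : ℝ → V →ₗ[ℝ] V,
      (∃ (n : ℕ) (C : ℕ → V →ₗ[ℝ] V),
        ∀ t : ℝ, B t = ∑ j ∈ Finset.range (n + 1), t ^ j • C j) ∧
      (∀ x : V, ContDiff ℝ (⊤ : ℕ∞) fun t : ℝ => B t x) ∧
      B 0 = LinearMap.id ∧
      (∀ t : ℝ, (δ t) ∘ₗ (B t) = A ∘ₗ (δ t)) ∧
      (∀ t : ℝ, t ≠ 0 → B t = (δ t⁻¹) ∘ₗ A ∘ₗ (δ t)) := by
  let := hW.chooseDecomposition
  have hA_filt : ∀ m, ∀ x ∈ W m, ∀ i, m < i → (decompose W (A x) i : V) = 0 :=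
    Submodule.forall_mem_of_forall_mem_Icc hW0 hWtop (by simp) fun k hk hkN x hx i hki =>
      decompose_eq_zero_of_mem_iSup W (hA1 k hk hkN x hx) (by simp only [mem_Icc]; omega)
  have hA_diag : ∀ m, ∀ x ∈ W m, (decompose W (A x) m : V) = x :=
    Submodule.forall_mem_of_forall_mem_Icc hW0 hWtop (by simp) fun k hk hkN x hx => by
      have := decompose_eq_zero_of_mem_iSup W (hA2 k hk hkN x hx) (m := k)
        (by simp only [mem_Icc]; omega)
      rwa [decompose_sub, DFinsupp.sub_apply, Submodule.coe_sub, decompose_of_mem_same W hx,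
        sub_eq_zero] at this
  set C := degreeLoweringPart W A
  have hB : ∀ t, δ t ∘ₗ ∑ j ∈ range (N + 1), t ^ j • C j = A ∘ₗ δ t := fun t =>
    comp_sum_pow_smul_degreeLoweringPart hWtop hA_filt (hδ t)
  refine ⟨fun t => ∑ j ∈ range (N + 1), t ^ j • C j, ⟨N, C, fun t => rfl⟩, fun x => ?_, ?_, hB,
    fun t ht => ?_⟩
  · simp only [LinearMap.coe_sum, Finset.sum_apply, LinearMap.smul_apply]
    exact ContDiff.sum fun j _ => (contDiff_id.pow j).smul contDiff_const
  · simp [Finset.sum_range_succ', degreeLoweringPart_zero hA_diag, C]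
  · calc ∑ j ∈ range (N + 1), t ^ j • C j
        = (δ t⁻¹ ∘ₗ δ t) ∘ₗ ∑ j ∈ range (N + 1), t ^ j • C j := by
          rw [comp_eq_id_of_mul_eq_one (inv_mul_cancel₀ ht) (hδ t⁻¹) (hδ t), LinearMap.id_comp]
      _ = δ t⁻¹ ∘ₗ A ∘ₗ δ t := by rw [LinearMap.comp_assoc, hB t]

/-- change of splitting.  If a linear map `A` preserves the filtration
`F^k = W_1 + ⋯ + W_{min(k,N)}` and induces the identity on each graded quotient, then
`B t := δ_t⁻¹ ∘ A ∘ δ_t` (for `t ≠ 0`) extends to a family of linear maps, polynomial in `t`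
(in particular `C^∞`), with `B 0 = id` and `δ_t ∘ B t = A ∘ δ_t` for all `t`. -/
theorem change_of_splitting
    {V : Type*} [NormedAddCommGroup V] [NormedSpace ℝ V] [FiniteDimensional ℝ V]
    (N : ℕ) (hN : 1 ≤ N) (W : ℕ → Submodule ℝ V)
    (hW : DirectSum.IsInternal W) (hW0 : W 0 = ⊥) (hWtop : ∀ i : ℕ, N < i → W i = ⊥)
    (δ : ℝ → V →ₗ[ℝ] V)
    (hδ : ∀ (t : ℝ) (i : ℕ), ∀ x ∈ W i, δ t x = t ^ i • x)
    (A : V →ₗ[ℝ] V)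
    (hA1 : ∀ k : ℕ, 1 ≤ k → k ≤ N → ∀ x ∈ W k,
      A x ∈ ⨆ i ∈ Finset.Icc 1 (min k N), W i)
    (hA2 : ∀ k : ℕ, 1 ≤ k → k ≤ N → ∀ x ∈ W k,
      A x - x ∈ ⨆ i ∈ Finset.Icc 1 (min (k - 1) N), W i) :
    ∃ B : ℝ → V →ₗ[ℝ] V,
      (∃ (n : ℕ) (C : ℕ → V →ₗ[ℝ] V),
        ∀ t : ℝ, B t = ∑ j ∈ Finset.range (n + 1), t ^ j • C j) ∧
      (∀ x : V, ContDiff ℝ (⊤ : ℕ∞) fun t : ℝ => B t x) ∧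
      B 0 = LinearMap.id ∧
      (∀ t : ℝ, (δ t) ∘ₗ (B t) = A ∘ₗ (δ t)) ∧
      (∀ t : ℝ, t ≠ 0 → B t = (δ t⁻¹) ∘ₗ A ∘ₗ (δ t)) :=
  change_of_splitting_general N W hW hW0 hWtop δ hδ A hA1 hA2
end
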